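/- arXiv:1806.02642 — 6 statements merged into one kernel-verified Lean document; each statement's English description precedes it below -/
import Mathlib

section
/- For every natural number m ≥ 1, the maximum over θ ∈ ℝ of r(θ) = (1+cos θ)^m + (1+sin θ)^m satisfies max_θ r(θ) ≥ 2^m + 1 + m/2^{m+1}. -/
/-!
Evaluate `r` at the small angle `t = 2⁻ᵐ`. Bernoulli's inequality with `cos t ≥ 1 - t²/2` gives
`(1 + cos t)ᵐ ≥ 2ᵐ (1 - m t²/4)`, and with `sin t ≥ t - t³/6` it gives `(1 + sin t)ᵐ ≥ 1 + m (t - t³/6)`.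
Since `2ᵐ t² = t`, the sum is at least `2ᵐ + 1 + m t (3/4 - t²/6) ≥ 2ᵐ + 1 + m t / 2`.
-/

open Real

lemma bddAbove_range_one_add_cos_pow_add_one_add_sin_pow (m : ℕ) :
    BddAbove (Set.range fun θ : ℝ => (1 + cos θ) ^ m + (1 + sin θ) ^ m) := by
  refine ⟨2 ^ m + 2 ^ m, ?_⟩
  rintro _ ⟨θ, rfl⟩
  exact add_le_add
    (pow_le_pow_left₀ (by linarith [neg_one_le_cos θ]) (by linarith [cos_le_one θ]) m)
    (pow_le_pow_left₀ (by linarith [neg_one_le_sin θ]) (by linarith [sin_le_one θ]) m)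

lemma two_pow_mul_one_sub_le_one_add_cos_pow {x : ℝ} (hx : x ^ 2 ≤ 4) (m : ℕ) :
    2 ^ m * (1 - m * (x ^ 2 / 4)) ≤ (1 + cos x) ^ m :=
  calc 2 ^ m * (1 - m * (x ^ 2 / 4)) ≤ 2 ^ m * (1 + -(x ^ 2 / 4)) ^ m := by
        gcongr
        linarith [one_add_mul_le_pow (show -2 ≤ -(x ^ 2 / 4) by linarith) m]
    _ = (2 - x ^ 2 / 2) ^ m := by rw [← mul_pow]; ring_nf
    _ ≤ (1 + cos x) ^ m := by
        gcongr
        · linarith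
        · linarith [one_sub_sq_div_two_le_cos (x := x)]

lemma one_add_mul_sub_cube_le_one_add_sin_pow {x : ℝ} (hx : 0 ≤ x) (m : ℕ) :
    1 + m * (x - x ^ 3 / 6) ≤ (1 + sin x) ^ m :=
  calc 1 + m * (x - x ^ 3 / 6) ≤ 1 + m * sin x := by gcongr; exact sin_ge_sub_cube hx
    _ ≤ (1 + sin x) ^ m := one_add_mul_le_pow (by linarith [neg_one_le_sin x]) m

theorem stmt_2_general (m : ℕ) :
    (2 : ℝ) ^ m + 1 + m / 2 ^ (m + 1) ≤
      ⨆ θ : ℝ, (1 + cos θ) ^ m + (1 + sin θ) ^ m := by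
  set t : ℝ := (2 ^ m)⁻¹ with ht
  have ht0 : 0 < t := by positivity
  have ht1 : t ≤ 1 := inv_le_one_of_one_le₀ (one_le_pow₀ one_le_two)
  have h2t : (2 : ℝ) ^ m * t = 1 := mul_inv_cancel₀ (by positivity)
  refine le_ciSup_of_le (bddAbove_range_one_add_cos_pow_add_one_add_sin_pow m) t ?_
  have hcos := two_pow_mul_one_sub_le_one_add_cos_pow (x := t) (by nlinarith) m
  have hsin := one_add_mul_sub_cube_le_one_add_sin_pow ht0.le m
  have hmt : 0 ≤ (m : ℝ) * t := by positivity
  calc (2 : ℝ) ^ m + 1 + m / 2 ^ (m + 1) = 2 ^ m + 1 + m * t / 2 := by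
        rw [ht, pow_succ]; field_simp
    _ ≤ 2 ^ m * (1 - m * (t ^ 2 / 4)) + (1 + m * (t - t ^ 3 / 6)) := by
        have h2t2 : (2 : ℝ) ^ m * t ^ 2 = t := by rw [sq, ← mul_assoc, h2t, one_mul]
        nlinarith [mul_le_mul_of_nonneg_left (pow_le_one₀ ht0.le ht1 : t ^ 2 ≤ 1) hmt]
    _ ≤ _ := add_le_add hcos hsin

theorem stmt_2 (m : ℕ) (hm : 1 ≤ m) :
    (2 : ℝ) ^ m + 1 + m / 2 ^ (m + 1) ≤
      ⨆ θ : ℝ, (1 + cos θ) ^ m + (1 + sin θ) ^ m :=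
  stmt_2_general m
end

section
/- For every natural number m ≥ 1, the supremum over θ ∈ ℝ of r(θ) = (1+cos θ)^m + (1+sin θ)^m satisfies sup_θ r(θ) ≤ 2^m + 1 + 8m/2^{m+1}. -/
/-!
Write `s, c` for `sin θ, cos θ`, by symmetry with `s ≤ c`. If `s < 0` then `r(θ) ≤ 2^m + 1`
trivially. For `m ≤ 14`, `x = 1 + s` and `y = 1 + c` satisfy `x + y = 2 + p` and
`x y = (1 + p)^2 / 2` with `p = s + c`, so `r(θ)` is a polynomial in `p ∈ [1, √2]` and the bound
is checked directly. For `m ≥ 15` we use `1 + c ≤ 2 - s^2/2`. For `s ≤ 1/(4m)` the mean value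
bounds give `r(θ) ≤ 2^m + 1 + m (4s/3 - 2^(m-3) s^2)`, and the quadratic in `s` never exceeds
`4m/2^m`; for larger `s` the loss `2^m - (2 - s^2/2)^m` already outweighs `(1 + s)^m`, so
`r(θ) ≤ 2^m`.
-/

open Real

def newtonPowSum (e₁ e₂ : ℝ) : ℕ → ℝ
  | 0 => 2
  | 1 => e₁
  | k + 2 => e₁ * newtonPowSum e₁ e₂ (k + 1) - e₂ * newtonPowSum e₁ e₂ k

lemma pow_add_pow_eq_newtonPowSum (x y : ℝ) :
    ∀ k, x ^ k + y ^ k = newtonPowSum (x + y) (x * y) k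
  | 0 => by norm_num [newtonPowSum]
  | 1 => by simp [newtonPowSum]
  | k + 2 => by
    rw [newtonPowSum, ← pow_add_pow_eq_newtonPowSum x y k,
      ← pow_add_pow_eq_newtonPowSum x y (k + 1)]
    ring

lemma one_add_pow_mul_one_sub_mul_le_one {u : ℝ} (hu₁ : -1 ≤ u) (hu₂ : u ≤ 1) (k : ℕ) :
    (1 + u) ^ k * (1 - k * u) ≤ 1 := by
  have hB : 1 - k * u ≤ (1 - u) ^ k := by
    simpa [sub_eq_add_neg] using one_add_mul_le_pow (a := -u) (by linarith) k
  calc (1 + u) ^ k * (1 - k * u) ≤ (1 + u) ^ k * (1 - u) ^ k :=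
        mul_le_mul_of_nonneg_left hB (pow_nonneg (by linarith) k)
    _ = (1 - u ^ 2) ^ k := by rw [← mul_pow]; ring
    _ ≤ 1 := pow_le_one₀ (by nlinarith) (by nlinarith)

lemma pow_add_mul_mul_pow_le_add_pow {a b : ℝ} (ha : 0 ≤ a) (hb : 0 ≤ b) (n : ℕ) :
    a ^ (n + 1) + (n + 1) * b * a ^ n ≤ (a + b) ^ (n + 1) := by
  induction n with
  | zero => simp
  | succ n ih =>
    calc a ^ (n + 1 + 1) + ((n + 1 : ℕ) + 1) * b * a ^ (n + 1)
        ≤ (a + b) * (a ^ (n + 1) + (n + 1) * b * a ^ n) := by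
          push_cast
          have : 0 ≤ (n + 1) * b ^ 2 * a ^ n := by positivity
          linear_combination this
      _ ≤ (a + b) * (a + b) ^ (n + 1) := by gcongr
      _ = (a + b) ^ (n + 1 + 1) := by ring

lemma pow_add_pow_le_pow_of_le {α β γ : ℝ} (hα : 0 ≤ α) (hβ : 0 ≤ β) (hαγ : α ≤ γ) (hβγ : β ≤ γ)
    {k m : ℕ} (hk : α ^ k + β ^ k ≤ γ ^ k) (hkm : k ≤ m) : α ^ m + β ^ m ≤ γ ^ m := by
  obtain ⟨j, rfl⟩ := Nat.exists_eq_add_of_le hkm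
  have hα' : α ^ j ≤ γ ^ j := pow_le_pow_left₀ hα hαγ j
  have hβ' : β ^ j ≤ γ ^ j := pow_le_pow_left₀ hβ hβγ j
  calc α ^ (k + j) + β ^ (k + j) = α ^ k * α ^ j + β ^ k * β ^ j := by ring
    _ ≤ α ^ k * γ ^ j + β ^ k * γ ^ j := by gcongr
    _ = (α ^ k + β ^ k) * γ ^ j := by ring
    _ ≤ γ ^ k * γ ^ j := by gcongr; exact (pow_nonneg hα j).trans hα'
    _ = γ ^ (k + j) := by ring

lemma sixty_four_mul_add_one_le_pow {m : ℕ} (hm : 15 ≤ m) : (64 * m + 1 : ℝ) ≤ (8 / 5) ^ m := by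
  induction m, hm using Nat.le_induction with
  | base => norm_num
  | succ m hm ih =>
    have : (15 : ℝ) ≤ m := by exact_mod_cast hm
    rw [pow_succ]; push_cast; nlinarith

/-- For `0 ≤ c` and `s^2 + c^2 = 1` we have `1 + c ≤ 2 - s^2/2`, so `r(θ) ≤ rUpper m (sin θ)`
when `0 ≤ sin θ ≤ cos θ`. -/
noncomputable def rUpper (m : ℕ) (s : ℝ) : ℝ := (1 + s) ^ m + (2 - s ^ 2 / 2) ^ m

lemma rUpper_le_of_mem_Icc {a b s : ℝ} (ha : 0 ≤ a) (has : a ≤ s) (hsb : s ≤ b) (hs : s ^ 2 ≤ 2)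
    (m : ℕ) : rUpper m s ≤ (1 + b) ^ m + (2 - a ^ 2 / 2) ^ m := by
  have h₁ : (1 + s) ^ m ≤ (1 + b) ^ m := pow_le_pow_left₀ (by linarith) (by linarith) m
  have h₂ : (2 - s ^ 2 / 2) ^ m ≤ (2 - a ^ 2 / 2) ^ m :=
    pow_le_pow_left₀ (by linarith) (by nlinarith) m
  exact add_le_add h₁ h₂

lemma rUpper_le_of_mul_le {n : ℕ} {s : ℝ} (hs : 0 ≤ s) (hns : 4 * (n + 1) * s ≤ 1) :
    rUpper (n + 1) s ≤ 2 ^ (n + 1) + 1 + 4 * (n + 1 : ℕ) / 2 ^ (n + 1) := by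
  have hn : (n : ℝ) * s ≤ 1 / 4 := by nlinarith
  have hs1 : s ≤ 1 / 4 := by nlinarith
  have hb := one_add_pow_mul_one_sub_mul_le_one (u := s) (by linarith) (by linarith) n
  have hx : (1 + s) ^ (n + 1) ≤ 1 + (n + 1) * s * (1 + s) ^ n := by
    rw [pow_succ]; linear_combination hb
  have hxn : (1 + s) ^ n ≤ 4 / 3 := by
    nlinarith [pow_nonneg (by linarith : (0:ℝ) ≤ 1 + s) n]
  have hB := pow_add_mul_mul_pow_le_add_pow (a := 2 - s ^ 2 / 2) (b := s ^ 2 / 2)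
    (by nlinarith) (by positivity) n
  have hBn : 2 ^ n / 2 ≤ (2 - s ^ 2 / 2) ^ n := by
    have hbern := one_add_mul_le_pow (a := -(s ^ 2 / 4)) (by nlinarith) n
    have e : (2 - s ^ 2 / 2) ^ n = 2 ^ n * (1 + -(s ^ 2 / 4)) ^ n := by rw [← mul_pow]; ring
    rw [e, div_eq_mul_one_div]
    gcongr
    nlinarith
  set N : ℝ := 2 ^ n
  have hNpos : 0 < N := by positivity
  have key : (4 / 3) * s - N * s ^ 2 / 4 ≤ 2 / N := by
    rw [le_div_iff₀ hNpos]; nlinarith [sq_nonneg (N * s - 8 / 3)]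
  rw [sub_add_cancel, show (2 : ℝ) ^ (n + 1) = 2 * N by rw [pow_succ]; ring] at hB
  calc rUpper (n + 1) s
      ≤ (1 + (n + 1) * s * (1 + s) ^ n)
          + (2 * N - (n + 1) * (s ^ 2 / 2) * (2 - s ^ 2 / 2) ^ n) := by
        unfold rUpper; linarith
    _ ≤ 2 * N + 1 + (n + 1) * ((4 / 3) * s - N * s ^ 2 / 4) := by
        have h₁ : s * (1 + s) ^ n ≤ (4 / 3) * s := by nlinarith
        have h₂ : (s ^ 2 / 2) * (N / 2) ≤ (s ^ 2 / 2) * (2 - s ^ 2 / 2) ^ n := by gcongr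
        have hn₀ : (0 : ℝ) ≤ n + 1 := by positivity
        nlinarith [mul_le_mul_of_nonneg_left h₁ hn₀, mul_le_mul_of_nonneg_left h₂ hn₀]
    _ ≤ 2 * N + 1 + (n + 1) * (2 / N) := by gcongr
    _ = 2 ^ (n + 1) + 1 + 4 * (n + 1 : ℕ) / 2 ^ (n + 1) := by
        rw [pow_succ]; push_cast; field_simp; ring

lemma rUpper_le_two_pow_of_le_quarter {m : ℕ} (hm : 15 ≤ m) {s : ℝ} (hs₁ : 1 / (4 * m) ≤ s)
    (hs₂ : s ≤ 1 / 4) : rUpper m s ≤ 2 ^ m := by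
  have hm' : (15 : ℝ) ≤ m := by exact_mod_cast hm
  set u : ℝ := 1 / (64 * m ^ 2) with hu
  have hs₀ : 0 ≤ s := le_trans (by positivity) hs₁
  have h := rUpper_le_of_mem_Icc (by positivity) hs₁ hs₂ (by nlinarith) m
  have e₁ : (1 + 1 / 4 : ℝ) ^ m = 2 ^ m * (5 / 8) ^ m := by rw [← mul_pow]; norm_num
  have e₂ : (2 - (1 / (4 * m)) ^ 2 / 2 : ℝ) ^ m = 2 ^ m * (1 - u) ^ m := by
    rw [← mul_pow]; congr 1; rw [hu]; field_simp; ring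
  have hu₀ : 0 ≤ u := by positivity
  have hu₁ : u ≤ 1 := by rw [hu, div_le_one (by positivity)]; nlinarith
  have hmu : (m : ℝ) * u * (64 * m) = 1 := by rw [hu]; field_simp
  have hB : (1 - u) ^ m * (64 * m + 1) ≤ 64 * m := by
    have := one_add_pow_mul_one_sub_mul_le_one (u := -u) (by linarith) (by linarith) m
    rw [← sub_eq_add_neg, mul_neg, sub_neg_eq_add] at this
    nlinarith
  have hA : (5 / 8 : ℝ) ^ m * (64 * m + 1) ≤ 1 := by
    calc (5 / 8 : ℝ) ^ m * (64 * m + 1) ≤ (5 / 8) ^ m * (8 / 5) ^ m := by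
          gcongr; exact sixty_four_mul_add_one_le_pow hm
      _ = 1 := by rw [← mul_pow]; norm_num
  have : (5 / 8 : ℝ) ^ m + (1 - u) ^ m ≤ 1 := by
    have : (0 : ℝ) < 64 * m + 1 := by positivity
    nlinarith
  rw [e₁, e₂] at h
  nlinarith [pow_pos (two_pos (α := ℝ)) m]

lemma rUpper_le_two_pow_of_quarter_le {m : ℕ} (hm : 15 ≤ m) {s : ℝ} (hs₁ : 1 / 4 ≤ s)
    (hs₂ : s ^ 2 ≤ 1 / 2) : rUpper m s ≤ 2 ^ m := by
  have hs : s ≤ 71 / 100 := by nlinarith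
  refine (rUpper_le_of_mem_Icc (by norm_num) hs₁ hs (by linarith) m).trans ?_
  exact pow_add_pow_le_pow_of_le (by norm_num) (by norm_num) (by norm_num) (by norm_num)
    (by norm_num) hm

lemma rUpper_le {m : ℕ} (hm : 15 ≤ m) {s : ℝ} (hs₀ : 0 ≤ s) (hs : s ^ 2 ≤ 1 / 2) :
    rUpper m s ≤ 2 ^ m + 1 + 4 * m / 2 ^ m := by
  have hslack : (2 : ℝ) ^ m ≤ 2 ^ m + 1 + 4 * m / 2 ^ m := by
    have : (0 : ℝ) ≤ 4 * m / 2 ^ m := by positivity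
    linarith
  rcases le_or_gt s (1 / (4 * m)) with hsmall | hmid
  · obtain ⟨n, rfl⟩ : ∃ n, m = n + 1 := ⟨m - 1, by omega⟩
    refine rUpper_le_of_mul_le hs₀ ?_
    rw [le_div_iff₀ (by positivity)] at hsmall
    push_cast at hsmall
    linarith
  rcases le_or_gt s (1 / 4) with hs₁ | hlarge
  · exact (rUpper_le_two_pow_of_le_quarter hm hmid.le hs₁).trans hslack
  · exact (rUpper_le_two_pow_of_quarter_le hm hlarge.le hs).trans hslack

set_option maxHeartbeats 1000000 in
lemma newtonPowSum_le {m : ℕ} (hm : m ≤ 14) {p : ℝ} (hp₁ : 1 ≤ p) (hp₂ : p ^ 2 ≤ 2) :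
    newtonPowSum (2 + p) ((1 + p) ^ 2 / 2) m ≤ 2 ^ m + 1 + 4 * m / 2 ^ m := by
  obtain ⟨t, rfl⟩ : ∃ t, p = 1 + t := ⟨p - 1, by ring⟩
  have ht : 0 ≤ t := by linarith
  have hT : 0 ≤ 1 / 2 - t := by nlinarith
  have h := fun k => mul_nonneg (pow_nonneg ht k) hT
  -- In `t = p - 1` the claim is `-4m/2^m + m t - c₂ t^2 + O(t^3) ≤ 0` with `c₂ ≈ m 2^(m-2)`:
  -- the square `(2^(m-1) t - 1)^2` absorbs the first three terms, `t^k (1/2 - t) ≥ 0` the rest.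
  interval_cases m <;> simp only [newtonPowSum] <;> ring_nf <;> norm_num <;>
    nlinarith [sq_nonneg (2 ^ (m - 1) * t - 1), h 2, h 3, h 4, h 5, h 6, h 7, h 8, h 9, h 10,
      h 11, h 12, h 13]

lemma one_add_pow_add_one_add_pow_le {s c : ℝ} (h : s ^ 2 + c ^ 2 = 1) (m : ℕ) :
    (1 + c) ^ m + (1 + s) ^ m ≤ 2 ^ m + 1 + 4 * m / 2 ^ m := by
  wlog hsc : s ≤ c generalizing s c
  · rw [add_comm]; exact this (by linarith) (by linarith)
  have hc₁ : c ≤ 1 := by nlinarith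
  rcases lt_or_ge s 0 with hs | hs
  · have h₁ : (1 + s) ^ m ≤ 1 := pow_le_one₀ (by nlinarith) (by linarith)
    have h₂ : (1 + c) ^ m ≤ 2 ^ m := pow_le_pow_left₀ (by nlinarith) (by linarith) m
    have : (0 : ℝ) ≤ 4 * m / 2 ^ m := by positivity
    linarith
  rcases le_or_gt m 14 with hm | hm
  · have e₁ : (1 + c) + (1 + s) = 2 + (s + c) := by ring
    have e₂ : (1 + c) * (1 + s) = (1 + (s + c)) ^ 2 / 2 := by linear_combination -h / 2
    rw [pow_add_pow_eq_newtonPowSum, e₁, e₂]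
    exact newtonPowSum_le hm (by nlinarith) (by nlinarith [sq_nonneg (s - c)])
  · have hc : 1 + c ≤ 2 - s ^ 2 / 2 := by nlinarith
    have := pow_le_pow_left₀ (by linarith) hc m
    have := rUpper_le hm hs (by nlinarith)
    unfold rUpper at this
    linarith

theorem stmt_3_general (m : ℕ) :
    (⨆ θ : ℝ, (1 + cos θ) ^ m + (1 + sin θ) ^ m) ≤
      2 ^ m + 1 + 8 * m / 2 ^ (m + 1) := by
  rw [show (8 * m / 2 ^ (m + 1) : ℝ) = 4 * m / 2 ^ m by rw [pow_succ]; ring]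
  exact ciSup_le fun θ => one_add_pow_add_one_add_pow_le (sin_sq_add_cos_sq θ) m

theorem stmt_3 (m : ℕ) (hm : 1 ≤ m) :
    (⨆ θ : ℝ, (1 + cos θ) ^ m + (1 + sin θ) ^ m) ≤
      2 ^ m + 1 + 8 * m / 2 ^ (m + 1) :=
  stmt_3_general m
end

section
/- Let S and T be Hermitian operators on a finite-dimensional complex Hilbert space satisfying S² + T² = I (not necessarily commuting), and let ψ be a unit vector. Then for every natural number m ≥ 1, ⟨ψ, ((I+S)^m + (I+T)^m) ψ⟩ ≤ max_θ ((1+cos θ)^m + (1+sin θ)^m). -/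
set_option maxHeartbeats 1000000


open Real

namespace Stmt6Aux

/-- coefficient pair `(a_k, b_k)` with `(1+S)^k v = a_k v + b_k S v` on the
eigenspace where `S² = c²`. -/
def ab (c : ℝ) : ℕ → ℝ × ℝ
  | 0 => (1, 0)
  | (k+1) => ((ab c k).1 + c ^ 2 * (ab c k).2, (ab c k).1 + (ab c k).2)

lemma ab_nonneg (c : ℝ) (k : ℕ) : 0 ≤ (ab c k).1 ∧ 0 ≤ (ab c k).2 := by
  induction k with
  | zero => simp [ab]
  | succ k ih =>
    refine ⟨?_, ?_⟩
    · simpa [ab] using add_nonneg ih.1 (mul_nonneg (sq_nonneg c) ih.2)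
    · simpa [ab] using add_nonneg ih.1 ih.2

lemma ab_sum (c : ℝ) (k : ℕ) : (ab c k).1 + c * (ab c k).2 = (1 + c) ^ k := by
  induction k with
  | zero => simp [ab]
  | succ k ih =>
    simp only [ab, pow_succ]
    linear_combination (1 + c) * ih

variable {n : ℕ}

lemma expand_pow (S : EuclideanSpace ℂ (Fin n) →ₗ[ℂ] EuclideanSpace ℂ (Fin n))
    (c : ℝ) (v : EuclideanSpace ℂ (Fin n))
    (hv : (S ^ 2) v = ((c : ℂ) ^ 2) • v) (m : ℕ) :
    ((1 + S) ^ m) v = (((ab c m).1 : ℂ)) • v + (((ab c m).2 : ℂ)) • (S v) := by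
  induction m with
  | zero => simp [ab]
  | succ m ih =>
    have h1 : ((1 + S) ^ (m + 1)) v = (1 + S) (((1 + S) ^ m) v) := by
      rw [pow_succ', Module.End.mul_apply]
    have hSSv : S (S v) = ((c : ℂ) ^ 2) • v := by
      have : (S ^ 2) v = S (S v) := by rw [pow_two, Module.End.mul_apply]
      rw [← this, hv]
    rw [h1, ih]
    simp only [LinearMap.add_apply, Module.End.one_apply, map_add, map_smul, hSSv, ab]
    push_cast
    module

lemma key (S : EuclideanSpace ℂ (Fin n) →ₗ[ℂ] EuclideanSpace ℂ (Fin n))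
    (hS : S.IsSymmetric) (c : ℝ) (hc : 0 ≤ c)
    (v : EuclideanSpace ℂ (Fin n)) (hv : (S ^ 2) v = ((c : ℂ) ^ 2) • v) (m : ℕ) :
    (inner ℂ v (((1 + S) ^ m) v) : ℂ).re ≤ (1 + c) ^ m * ‖v‖ ^ 2 := by
  have hnormSv : ‖S v‖ = c * ‖v‖ := by
    have h1 : (inner ℂ (S v) (S v) : ℂ) = ((c : ℂ) ^ 2) * inner ℂ v v := by
      have h2 : S (S v) = ((c : ℂ) ^ 2) • v := by
        have : (S ^ 2) v = S (S v) := by rw [pow_two, Module.End.mul_apply]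
        rw [← this, hv]
      rw [hS v (S v), h2, inner_smul_right]
    have h3 : ‖S v‖ ^ 2 = c ^ 2 * ‖v‖ ^ 2 := by
      rw [inner_self_eq_norm_sq_to_K, inner_self_eq_norm_sq_to_K] at h1
      exact Complex.ofReal_injective (by push_cast; exact h1)
    calc ‖S v‖ = √(‖S v‖ ^ 2) := (Real.sqrt_sq (norm_nonneg _)).symm
      _ = √((c * ‖v‖) ^ 2) := by rw [h3]; ring_nf
      _ = c * ‖v‖ := Real.sqrt_sq (by positivity)
  have hrebound : (inner ℂ v (S v) : ℂ).re ≤ c * ‖v‖ ^ 2 := by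
    calc (inner ℂ v (S v) : ℂ).re ≤ ‖(inner ℂ v (S v) : ℂ)‖ := Complex.re_le_norm _
      _ = ‖(inner ℂ v (S v) : ℂ)‖ := rfl
      _ ≤ ‖v‖ * ‖S v‖ := norm_inner_le_norm v (S v)
      _ = c * ‖v‖ ^ 2 := by rw [hnormSv]; ring
  have hre : (inner ℂ v (((1 + S) ^ m) v) : ℂ).re
      = (ab c m).1 * ‖v‖ ^ 2 + (ab c m).2 * (inner ℂ v (S v) : ℂ).re := by
    rw [expand_pow S c v hv m, inner_add_right, inner_smul_right, inner_smul_right,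
      inner_self_eq_norm_sq_to_K]
    simp [← Complex.ofReal_pow, Complex.add_re, Complex.mul_re]
  rw [hre]
  have hb := (ab_nonneg c m).2
  have hs := ab_sum c m
  nlinarith [mul_le_mul_of_nonneg_left hrebound hb, sq_nonneg (‖v‖),
    mul_nonneg hb (mul_nonneg hc (sq_nonneg (‖v‖)))]

lemma ortho (A : EuclideanSpace ℂ (Fin n) →ₗ[ℂ] EuclideanSpace ℂ (Fin n))
    (hA : A.IsSymmetric) (a b : ℝ) (hab : a ≠ b) (u w : EuclideanSpace ℂ (Fin n))
    (hu : A u = (a : ℂ) • u) (hw : A w = (b : ℂ) • w) :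
    (inner ℂ u w : ℂ) = 0 := by
  have h := hA u w
  rw [hu, hw, inner_smul_left, inner_smul_right, Complex.conj_ofReal] at h
  have hne : (a : ℂ) ≠ (b : ℂ) := by exact_mod_cast hab
  have h0 : ((a : ℂ) - b) * inner ℂ u w = 0 := by linear_combination h
  rcases mul_eq_zero.mp h0 with h' | h'
  · exact absurd (sub_eq_zero.mp h') hne
  · exact h'

end Stmt6Aux

open Stmt6Aux in
theorem stmt_6 (n : ℕ) (m : ℕ) (hm : 1 ≤ m)
    (S T : EuclideanSpace ℂ (Fin n) →ₗ[ℂ] EuclideanSpace ℂ (Fin n))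
    (hS : S.IsSymmetric) (hT : T.IsSymmetric)
    (hsum : S ^ 2 + T ^ 2 = 1)
    (ψ : EuclideanSpace ℂ (Fin n)) (hψ : ‖ψ‖ = 1) :
    (inner ℂ ψ (((1 + S) ^ m + (1 + T) ^ m) ψ) : ℂ).re ≤
      ⨆ θ : ℝ, (1 + cos θ) ^ m + (1 + sin θ) ^ m := by
  classical
  set A := S ^ 2 with hAdef
  have hA : A.IsSymmetric := hS.pow 2
  have hT2 : T ^ 2 = 1 - A := eq_sub_of_add_eq' hsum
  have hA1T : A = 1 - T ^ 2 := eq_sub_of_add_eq hsum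
  set e := hA.eigenvectorBasis finrank_euclideanSpace_fin with he
  set μ := hA.eigenvalues finrank_euclideanSpace_fin with hμdef
  have heig : ∀ i, A (e i) = (μ i : ℂ) • e i := fun i =>
    hA.apply_eigenvectorBasis finrank_euclideanSpace_fin i
  have hnorm_e : ∀ i, ‖e i‖ = 1 := fun i => (hA.eigenvectorBasis _).orthonormal.1 i
  -- eigenvalues lie in [0,1]
  have hμ01 : ∀ i, 0 ≤ μ i ∧ μ i ≤ 1 := by
    intro i
    have hself : (inner ℂ (e i) (e i) : ℂ) = 1 := by
      rw [inner_self_eq_norm_sq_to_K, hnorm_e i]; norm_num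
    have h1 : (inner ℂ (S (e i)) (S (e i)) : ℂ) = (μ i : ℂ) := by
      have hss : S (S (e i)) = (μ i : ℂ) • e i := by
        have : (S ^ 2) (e i) = S (S (e i)) := by rw [pow_two, Module.End.mul_apply]
        rw [← this]; exact heig i
      rw [hS (e i) (S (e i)), hss, inner_smul_right, hself, mul_one]
    have h2 : (inner ℂ (T (e i)) (T (e i)) : ℂ) = ((1 - μ i : ℝ) : ℂ) := by
      have htt : T (T (e i)) = ((1 - μ i : ℝ) : ℂ) • e i := by
        have h3 : (T ^ 2) (e i) = T (T (e i)) := by rw [pow_two, Module.End.mul_apply]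
        rw [← h3, hT2, LinearMap.sub_apply, Module.End.one_apply, heig i]
        push_cast
        module
      rw [hT (e i) (T (e i)), htt, inner_smul_right, hself, mul_one]
    rw [inner_self_eq_norm_sq_to_K] at h1 h2
    constructor
    · have : ‖S (e i)‖ ^ 2 = μ i := Complex.ofReal_injective (by push_cast; exact h1)
      nlinarith [sq_nonneg ‖S (e i)‖]
    · have h2' := congrArg Complex.re h2
      simp [← Complex.ofReal_pow] at h2'
      nlinarith [sq_nonneg ‖T (e i)‖, h2']
  -- decomposition of ψ into eigencomponents of A
  set R := Finset.image μ Finset.univ with hR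
  set P : ℝ → EuclideanSpace ℂ (Fin n) :=
    fun r => ∑ i ∈ Finset.univ.filter (fun i => μ i = r), (inner ℂ (e i) ψ : ℂ) • e i with hP
  have hdecomp : ∑ r ∈ R, P r = ψ := by
    rw [hP, hR,
      Finset.sum_fiberwise_of_maps_to (fun i _ => Finset.mem_image_of_mem μ (Finset.mem_univ i))]
    exact e.sum_repr' ψ
  have hPeig : ∀ r, A (P r) = (r : ℂ) • P r := by
    intro r
    rw [hP]
    simp only [map_sum, Finset.smul_sum]
    refine Finset.sum_congr rfl fun i hi => ?_
    rw [map_smul, heig i, (Finset.mem_filter.mp hi).2]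
    exact smul_comm _ _ _
  -- operators commuting with A preserve eigencomponents
  have hpres : ∀ X : EuclideanSpace ℂ (Fin n) →ₗ[ℂ] EuclideanSpace ℂ (Fin n),
      Commute A X → ∀ (r : ℝ) (v), A v = (r : ℂ) • v → A (X v) = (r : ℂ) • X v := by
    intro X hX r v hvv
    have h : A (X v) = X (A v) := by
      rw [← Module.End.mul_apply, ← Module.End.mul_apply, hX.eq]
    rw [h, hvv, map_smul]
  have hc1 : Commute A ((1 + S) ^ m) :=
    (((Commute.one_right A).add_right ((Commute.refl S).pow_left 2))).pow_right m
  have hc2 : Commute A ((1 + T) ^ m) := by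
    have hAT : Commute A T := by
      rw [hA1T]
      exact (Commute.one_left T).sub_left ((Commute.refl T).pow_left 2)
    exact ((Commute.one_right A).add_right hAT).pow_right m
  -- block-diagonal expansion of quadratic forms
  have hexp : ∀ X : EuclideanSpace ℂ (Fin n) →ₗ[ℂ] EuclideanSpace ℂ (Fin n),
      (∀ (r : ℝ) (v), A v = (r : ℂ) • v → A (X v) = (r : ℂ) • X v) →
      (inner ℂ ψ (X ψ) : ℂ) = ∑ r ∈ R, (inner ℂ (P r) (X (P r)) : ℂ) := by
    intro X hX
    conv_lhs => rw [← hdecomp]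
    rw [map_sum, inner_sum]
    refine Finset.sum_congr rfl fun r' hr' => ?_
    rw [sum_inner]
    refine Finset.sum_eq_single_of_mem r' hr' fun r hr hne => ?_
    exact ortho A hA r r' hne (P r) (X (P r')) (hPeig r) (hX r' (P r') (hPeig r'))
  -- total mass
  have hnormsum : ∑ r ∈ R, ‖P r‖ ^ 2 = 1 := by
    have h := hexp 1 (fun r v hv => by simpa using hv)
    simp only [Module.End.one_apply, inner_self_eq_norm_sq_to_K] at h
    have h2 : ((‖ψ‖ ^ 2 : ℝ) : ℂ) = ((∑ r ∈ R, ‖P r‖ ^ 2 : ℝ) : ℂ) := by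
      push_cast
      exact h
    have h3 := Complex.ofReal_injective h2
    rw [hψ] at h3
    simpa using h3.symm
  -- the supremum bound
  have hbdd : BddAbove (Set.range fun θ : ℝ => (1 + cos θ) ^ m + (1 + sin θ) ^ m) := by
    refine ⟨2 ^ m + 2 ^ m, ?_⟩
    rintro x ⟨θ, rfl⟩
    have h1 : (1 + cos θ) ^ m ≤ 2 ^ m :=
      pow_le_pow_left₀ (by nlinarith [Real.neg_one_le_cos θ]) (by nlinarith [Real.cos_le_one θ]) m
    have h2 : (1 + sin θ) ^ m ≤ 2 ^ m :=
      pow_le_pow_left₀ (by nlinarith [Real.neg_one_le_sin θ]) (by nlinarith [Real.sin_le_one θ]) m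
    simpa using add_le_add h1 h2
  have hCbound : ∀ r : ℝ, 0 ≤ r → r ≤ 1 →
      (1 + √r) ^ m + (1 + √(1 - r)) ^ m ≤
        ⨆ θ : ℝ, (1 + cos θ) ^ m + (1 + sin θ) ^ m := by
    intro r hr0 hr1
    have hs1 : sin (arcsin (√(1 - r))) = √(1 - r) :=
      Real.sin_arcsin (le_trans (by norm_num) (Real.sqrt_nonneg _))
        (Real.sqrt_le_one.mpr (by linarith))
    have hs2 : cos (arcsin (√(1 - r))) = √r := by
      rw [Real.cos_arcsin, Real.sq_sqrt (by linarith)]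
      congr 1
      ring
    calc (1 + √r) ^ m + (1 + √(1 - r)) ^ m
        = (1 + cos (arcsin (√(1 - r)))) ^ m + (1 + sin (arcsin (√(1 - r)))) ^ m := by
          rw [hs1, hs2]
      _ ≤ ⨆ θ : ℝ, (1 + cos θ) ^ m + (1 + sin θ) ^ m := le_ciSup hbdd _
  -- per-component bound
  have hterm : ∀ r ∈ R,
      (inner ℂ (P r) (((1 + S) ^ m + (1 + T) ^ m) (P r)) : ℂ).re ≤
        (⨆ θ : ℝ, (1 + cos θ) ^ m + (1 + sin θ) ^ m) * ‖P r‖ ^ 2 := by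
    intro r hr
    obtain ⟨i, -, rfl⟩ := Finset.mem_image.mp hr
    have hr0 : 0 ≤ μ i := (hμ01 i).1
    have hr1 : μ i ≤ 1 := (hμ01 i).2
    have hv1 : (S ^ 2) (P (μ i)) = ((√(μ i) : ℂ) ^ 2) • P (μ i) := by
      rw [← hAdef, hPeig (μ i)]
      congr 1
      rw [← Complex.ofReal_pow, Real.sq_sqrt hr0]
    have hv2 : (T ^ 2) (P (μ i)) = ((√(1 - μ i) : ℂ) ^ 2) • P (μ i) := by
      rw [hT2, LinearMap.sub_apply, Module.End.one_apply, hPeig (μ i),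
        ← Complex.ofReal_pow, Real.sq_sqrt (by linarith)]
      push_cast
      module
    have k1 := key S hS (√(μ i)) (Real.sqrt_nonneg _) (P (μ i)) hv1 m
    have k2 := key T hT (√(1 - μ i)) (Real.sqrt_nonneg _) (P (μ i)) hv2 m
    have hCb := hCbound (μ i) hr0 hr1
    rw [LinearMap.add_apply, inner_add_right, Complex.add_re]
    nlinarith [sq_nonneg ‖P (μ i)‖,
      mul_le_mul_of_nonneg_right hCb (sq_nonneg ‖P (μ i)‖)]
  -- assemble
  have hXpres : ∀ (r : ℝ) (v), A v = (r : ℂ) • v →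
      A (((1 + S) ^ m + (1 + T) ^ m) v) = (r : ℂ) • ((1 + S) ^ m + (1 + T) ^ m) v := by
    intro r v hvv
    rw [LinearMap.add_apply, map_add, hpres _ hc1 r v hvv, hpres _ hc2 r v hvv, smul_add]
  calc (inner ℂ ψ (((1 + S) ^ m + (1 + T) ^ m) ψ) : ℂ).re
      = (∑ r ∈ R, (inner ℂ (P r) (((1 + S) ^ m + (1 + T) ^ m) (P r)) : ℂ)).re := by
        rw [hexp _ hXpres]
    _ = ∑ r ∈ R, (inner ℂ (P r) (((1 + S) ^ m + (1 + T) ^ m) (P r)) : ℂ).re :=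
        by rw [Complex.re_sum]
    _ ≤ ∑ r ∈ R, (⨆ θ : ℝ, (1 + cos θ) ^ m + (1 + sin θ) ^ m) * ‖P r‖ ^ 2 :=
        Finset.sum_le_sum hterm
    _ = (⨆ θ : ℝ, (1 + cos θ) ^ m + (1 + sin θ) ^ m) * ∑ r ∈ R, ‖P r‖ ^ 2 :=
        (Finset.mul_sum _ _ _).symm
    _ = ⨆ θ : ℝ, (1 + cos θ) ^ m + (1 + sin θ) ^ m := by rw [hnormsum, mul_one]
end

section
/- Let A₀, A₁, B₀, B₁ be Hermitian operators with A_i² = I, B_j² = I on finite-dimensional Hilbert spaces H_A, H_B, and let ψ be a unit vector in H_A ⊗ H_B. Then ⟨ψ, (A₀⊗(B₀+B₁) + A₁⊗(B₀-B₁)) ψ⟩ ≤ 2√2. -/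
open Kronecker Matrix

private lemma stmt_8_aux1 (n : ℝ) (hn : 0 ≤ n) (h : n ^ 2 = 1) : n = 1 := by nlinarith

private lemma stmt_8_aux2 (a b : ℝ) (ha : 0 ≤ a) (hb : 0 ≤ b) (h : a ^ 2 + b ^ 2 = 4) :
    a + b ≤ 2 * Real.sqrt 2 := by
  have h2 : Real.sqrt 2 ^ 2 = 2 := Real.sq_sqrt (by norm_num)
  have h2n : (0:ℝ) ≤ Real.sqrt 2 := Real.sqrt_nonneg 2
  nlinarith [sq_nonneg (a - b), sq_nonneg (a + b - 2 * Real.sqrt 2)]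

theorem stmt_8 (nA nB : ℕ)
    (A0 A1 : Matrix (Fin nA) (Fin nA) ℂ) (B0 B1 : Matrix (Fin nB) (Fin nB) ℂ)
    (hA0 : A0.IsHermitian) (hA1 : A1.IsHermitian)
    (hB0 : B0.IsHermitian) (hB1 : B1.IsHermitian)
    (hA0sq : A0 * A0 = 1) (hA1sq : A1 * A1 = 1)
    (hB0sq : B0 * B0 = 1) (hB1sq : B1 * B1 = 1)
    (ψ : EuclideanSpace ℂ (Fin nA × Fin nB)) (hψ : ‖ψ‖ = 1) :
    (inner ℂ ψ (Matrix.toEuclideanLin (A0 ⊗ₖ (B0 + B1) + A1 ⊗ₖ (B0 - B1)) ψ) : ℂ).re ≤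
      2 * Real.sqrt 2 := by
  have hmul : ∀ (M N : Matrix (Fin nA × Fin nB) (Fin nA × Fin nB) ℂ)
      (x : EuclideanSpace ℂ (Fin nA × Fin nB)),
      Matrix.toEuclideanLin (M * N) x = Matrix.toEuclideanLin M (Matrix.toEuclideanLin N x) := by
    intro M N x
    simp [Matrix.toEuclideanLin_apply, Matrix.mulVec_mulVec]
  have hone : ∀ x : EuclideanSpace ℂ (Fin nA × Fin nB),
      Matrix.toEuclideanLin (1 : Matrix (Fin nA × Fin nB) (Fin nA × Fin nB) ℂ) x = x := by
    intro x
    simp [Matrix.toEuclideanLin_apply]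
  -- conjTranspose of kronecker products
  have hkT : ∀ (M : Matrix (Fin nA) (Fin nA) ℂ) (N : Matrix (Fin nB) (Fin nB) ℂ),
      (M ⊗ₖ N)ᴴ = Mᴴ ⊗ₖ Nᴴ := by
    intro M N
    ext ⟨i, j⟩ ⟨k, l⟩
    simp [Matrix.conjTranspose_apply, Matrix.kroneckerMap_apply, mul_comm]
  -- adjoint property
  have hadj : ∀ (M : Matrix (Fin nA × Fin nB) (Fin nA × Fin nB) ℂ), Mᴴ = M →
      ∀ x y : EuclideanSpace ℂ (Fin nA × Fin nB),
      (inner ℂ x (Matrix.toEuclideanLin M y) : ℂ) = inner ℂ (Matrix.toEuclideanLin M x) y := by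
    intro M hM x y
    have h := Matrix.toEuclideanLin_conjTranspose_eq_adjoint M
    rw [hM] at h
    conv_lhs => rw [show Matrix.toEuclideanLin M = LinearMap.adjoint (Matrix.toEuclideanLin M) from h]
    exact LinearMap.adjoint_inner_right (Matrix.toEuclideanLin M) x y
  -- hermitian of A ⊗ 1 and 1 ⊗ B
  have hA0H : (A0 ⊗ₖ (1 : Matrix (Fin nB) (Fin nB) ℂ))ᴴ = A0 ⊗ₖ 1 := by
    rw [hkT, hA0.eq, Matrix.conjTranspose_one]
  have hA1H : (A1 ⊗ₖ (1 : Matrix (Fin nB) (Fin nB) ℂ))ᴴ = A1 ⊗ₖ 1 := by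
    rw [hkT, hA1.eq, Matrix.conjTranspose_one]
  have hB0H : ((1 : Matrix (Fin nA) (Fin nA) ℂ) ⊗ₖ B0)ᴴ = 1 ⊗ₖ B0 := by
    rw [hkT, hB0.eq, Matrix.conjTranspose_one]
  have hB1H : ((1 : Matrix (Fin nA) (Fin nA) ℂ) ⊗ₖ B1)ᴴ = 1 ⊗ₖ B1 := by
    rw [hkT, hB1.eq, Matrix.conjTranspose_one]
  -- define the vectors
  set u0 := Matrix.toEuclideanLin (A0 ⊗ₖ (1 : Matrix (Fin nB) (Fin nB) ℂ)) ψ with hu0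
  set u1 := Matrix.toEuclideanLin (A1 ⊗ₖ (1 : Matrix (Fin nB) (Fin nB) ℂ)) ψ with hu1
  set v0 := Matrix.toEuclideanLin ((1 : Matrix (Fin nA) (Fin nA) ℂ) ⊗ₖ B0) ψ with hv0
  set v1 := Matrix.toEuclideanLin ((1 : Matrix (Fin nA) (Fin nA) ℂ) ⊗ₖ B1) ψ with hv1
  -- norms of the vectors
  have hnorm : ∀ (M : Matrix (Fin nA × Fin nB) (Fin nA × Fin nB) ℂ), Mᴴ = M → M * M = 1 →
      ‖Matrix.toEuclideanLin M ψ‖ = 1 := by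
    intro M hM hM2
    have h1 : (inner ℂ (Matrix.toEuclideanLin M ψ) (Matrix.toEuclideanLin M ψ) : ℂ) =
        inner ℂ ψ ψ := by
      rw [← hadj M hM, ← hmul, hM2, hone]
    have h2 : (‖Matrix.toEuclideanLin M ψ‖ : ℝ)^2 = ‖ψ‖^2 := by
      have e1 := @inner_self_eq_norm_sq ℂ _ _ _ _ (Matrix.toEuclideanLin M ψ)
      have e2 := @inner_self_eq_norm_sq ℂ _ _ _ _ ψ
      have h3 := congrArg Complex.re h1
      rw [← e1, ← e2]
      exact h3
    rw [hψ] at h2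
    exact stmt_8_aux1 _ (norm_nonneg _) (by rw [h2]; norm_num)
  have hsq : ∀ (M : Matrix (Fin nA) (Fin nA) ℂ), M * M = 1 →
      (M ⊗ₖ (1 : Matrix (Fin nB) (Fin nB) ℂ)) * (M ⊗ₖ 1) = 1 := by
    intro M hM
    rw [← Matrix.mul_kronecker_mul, hM, Matrix.mul_one, Matrix.one_kronecker_one]
  have hsq' : ∀ (M : Matrix (Fin nB) (Fin nB) ℂ), M * M = 1 →
      ((1 : Matrix (Fin nA) (Fin nA) ℂ) ⊗ₖ M) * (1 ⊗ₖ M) = 1 := by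
    intro M hM
    rw [← Matrix.mul_kronecker_mul, hM, Matrix.mul_one, Matrix.one_kronecker_one]
  have hnu0 : ‖u0‖ = 1 := hnorm _ hA0H (hsq _ hA0sq)
  have hnu1 : ‖u1‖ = 1 := hnorm _ hA1H (hsq _ hA1sq)
  have hnv0 : ‖v0‖ = 1 := hnorm _ hB0H (hsq' _ hB0sq)
  have hnv1 : ‖v1‖ = 1 := hnorm _ hB1H (hsq' _ hB1sq)
  -- decompose the CHSH operator
  have hdec0 : A0 ⊗ₖ (B0 + B1) =
      (A0 ⊗ₖ (1 : Matrix (Fin nB) (Fin nB) ℂ)) * ((1 : Matrix (Fin nA) (Fin nA) ℂ) ⊗ₖ B0)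
      + (A0 ⊗ₖ (1 : Matrix (Fin nB) (Fin nB) ℂ)) * ((1 : Matrix (Fin nA) (Fin nA) ℂ) ⊗ₖ B1) := by
    rw [← Matrix.mul_kronecker_mul, ← Matrix.mul_kronecker_mul]
    simp only [Matrix.mul_one, Matrix.one_mul]
    rw [← Matrix.kronecker_add]
  have hdec1 : A1 ⊗ₖ (B0 - B1) =
      (A1 ⊗ₖ (1 : Matrix (Fin nB) (Fin nB) ℂ)) * ((1 : Matrix (Fin nA) (Fin nA) ℂ) ⊗ₖ B0)
      - (A1 ⊗ₖ (1 : Matrix (Fin nB) (Fin nB) ℂ)) * ((1 : Matrix (Fin nA) (Fin nA) ℂ) ⊗ₖ B1) := by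
    rw [← Matrix.mul_kronecker_mul, ← Matrix.mul_kronecker_mul]
    simp only [Matrix.mul_one, Matrix.one_mul]
    ext ⟨i, j⟩ ⟨k, l⟩
    simp [Matrix.kroneckerMap_apply, mul_sub]
  -- compute the inner product
  have hinner : (inner ℂ ψ (Matrix.toEuclideanLin (A0 ⊗ₖ (B0 + B1) + A1 ⊗ₖ (B0 - B1)) ψ) : ℂ) =
      inner ℂ u0 (v0 + v1) + inner ℂ u1 (v0 - v1) := by
    rw [hdec0, hdec1]
    simp only [map_add, map_sub, LinearMap.add_apply, LinearMap.sub_apply,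
      inner_add_right, inner_sub_right, hmul]
    rw [hadj _ hA0H, hadj _ hA0H, hadj _ hA1H, hadj _ hA1H]
  rw [hinner]
  -- Cauchy-Schwarz bounds
  have cs0 : (inner ℂ u0 (v0 + v1) : ℂ).re ≤ ‖v0 + v1‖ := by
    calc (inner ℂ u0 (v0 + v1) : ℂ).re ≤ ‖u0‖ * ‖v0 + v1‖ := by
          exact re_inner_le_norm (𝕜 := ℂ) u0 (v0 + v1)
    _ = ‖v0 + v1‖ := by rw [hnu0, one_mul]
  have cs1 : (inner ℂ u1 (v0 - v1) : ℂ).re ≤ ‖v0 - v1‖ := by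
    calc (inner ℂ u1 (v0 - v1) : ℂ).re ≤ ‖u1‖ * ‖v0 - v1‖ := by
          exact re_inner_le_norm (𝕜 := ℂ) u1 (v0 - v1)
    _ = ‖v0 - v1‖ := by rw [hnu1, one_mul]
  -- parallelogram law
  have hpar : ‖v0 + v1‖^2 + ‖v0 - v1‖^2 = 4 := by
    have h := parallelogram_law_with_norm ℂ v0 v1
    rw [hnv0, hnv1] at h
    rw [h]
    norm_num
  have key : ‖v0 + v1‖ + ‖v0 - v1‖ ≤ 2 * Real.sqrt 2 :=
    stmt_8_aux2 _ _ (norm_nonneg _) (norm_nonneg _) hpar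
  calc ((inner ℂ u0 (v0 + v1) + inner ℂ u1 (v0 - v1) : ℂ)).re
      = (inner ℂ u0 (v0 + v1) : ℂ).re + (inner ℂ u1 (v0 - v1) : ℂ).re := Complex.add_re _ _
    _ ≤ ‖v0 + v1‖ + ‖v0 - v1‖ := add_le_add cs0 cs1
    _ ≤ 2 * Real.sqrt 2 := key
end

section
/- For every natural number m ≥ 2 and θ with sin(θ/2) = 1/2^{m-1}, one has (1+cos θ)^{m-1} + (1+sin θ)^{m-1} ≥ 2^{m-1} + 1 + (m-1)/2^m. -/
/-! Write `n = m - 1` and `s = sin (θ / 2) = 2⁻ⁿ`. Since `1 + cos θ = 2 (1 - s²)`, Bernoulli gives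
`(1 + cos θ)ⁿ ≥ 2ⁿ - n 2ⁿ s² = 2ⁿ - n s`; since `cos (θ / 2) ≥ 3/4`, `sin θ ≥ 3s/2` and Bernoulli gives
`(1 + sin θ)ⁿ ≥ 1 + 3ns/2`. The surplus `ns/2` is exactly `(m - 1) / 2ᵐ`. -/

open Real

lemma Real.one_add_cos_eq_two_mul_one_sub_sin_half_sq (θ : ℝ) :
    1 + cos θ = 2 * (1 - sin (θ / 2) ^ 2) := by
  rw [← cos_sq', cos_sq]
  ring_nf

lemma Real.two_pow_mul_one_sub_le_pow_one_add_cos (θ : ℝ) (n : ℕ) :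
    2 ^ n * (1 - n * sin (θ / 2) ^ 2) ≤ (1 + cos θ) ^ n := by
  have bernoulli : 1 + n * -sin (θ / 2) ^ 2 ≤ (1 + -sin (θ / 2) ^ 2) ^ n :=
    one_add_mul_le_pow (by nlinarith [sin_sq_le_one (θ / 2)]) n
  rw [one_add_cos_eq_two_mul_one_sub_sin_half_sq, mul_pow]
  gcongr
  simpa [sub_eq_add_neg] using bernoulli

lemma Real.three_halves_mul_sin_half_le_sin {θ : ℝ} (hθ : θ ∈ Set.Icc (-π) π)
    (hs₀ : 0 ≤ sin (θ / 2)) (hs₁ : sin (θ / 2) ≤ 1 / 2) :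
    3 / 2 * sin (θ / 2) ≤ sin θ := by
  have hc₀ : 0 ≤ cos (θ / 2) :=
    cos_nonneg_of_mem_Icc ⟨by linarith [hθ.1], by linarith [hθ.2]⟩
  have hc : 3 / 4 ≤ cos (θ / 2) := by nlinarith [sin_sq_add_cos_sq (θ / 2)]
  calc 3 / 2 * sin (θ / 2) = 2 * sin (θ / 2) * (3 / 4) := by ring
    _ ≤ 2 * sin (θ / 2) * cos (θ / 2) := by gcongr
    _ = sin θ := by rw [← sin_two_mul, mul_div_cancel₀ θ two_ne_zero]

theorem stmt_13 (m : ℕ) (hm : 2 ≤ m) (θ : ℝ) (hθ : θ ∈ Set.Ioo 0 π)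
    (hs : sin (θ / 2) = 1 / 2 ^ (m - 1)) :
    (2 : ℝ) ^ (m - 1) + 1 + ((m : ℝ) - 1) / 2 ^ m ≤
      (1 + cos θ) ^ (m - 1) + (1 + sin θ) ^ (m - 1) := by
  obtain ⟨n, rfl⟩ : ∃ n, m = n + 1 := ⟨m - 1, by omega⟩
  rw [Nat.add_sub_cancel] at hs ⊢
  have hs₁ : sin (θ / 2) ≤ 1 / 2 := by
    rw [hs]
    exact one_div_le_one_div_of_le two_pos (le_self_pow₀ one_le_two (by omega))
  have hcos := two_pow_mul_one_sub_le_pow_one_add_cos θ n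
  have hsin : n * (3 / 2 * sin (θ / 2)) ≤ n * sin θ := by
    gcongr
    exact three_halves_mul_sin_half_le_sin
      (Set.Ioo_subset_Icc_self ⟨by linarith [hθ.1, pi_pos], hθ.2⟩) (by rw [hs]; positivity) hs₁
  have hbernoulli : 1 + n * sin θ ≤ (1 + sin θ) ^ n :=
    one_add_mul_le_pow (by linarith [neg_one_le_sin θ]) n
  have hsq : (2 : ℝ) ^ n * (n * sin (θ / 2) ^ 2) = n * sin (θ / 2) := by rw [hs]; field_simp
  have herr : ((↑(n + 1) : ℝ) - 1) / 2 ^ (n + 1) = n * sin (θ / 2) / 2 := by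
    rw [hs]; push_cast; field_simp; ring
  rw [herr]
  linarith
end

section
/- For the m-player Hypercube game, the deterministic classical strategy in which every player assigns +1 to all vertices, except that player 1 assigns -1 to the vertex (1,1,...,1) when q₁ = 1, wins exactly on the 2^{m-1} + 1 questions q with q₁ = 0 or q = (1,0,...,0), giving winning probability 1/2 + 1/2^m. -/
open scoped Classical

/-- The deterministic strategy: player `i`, receiving question bit `qi`, assigns `-1`
to the vertex `(1,…,1)` if `i` is the first player and `qi = 1`, and `+1` everywhere else. -/
noncomputable def hcStrat (m : ℕ) (i : Fin m) (qi : Bool) (x : Fin m → Bool) : ℝ :=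
  if (i : ℕ) = 0 ∧ qi = true ∧ x = (fun _ => true) then -1 else 1

/-- The winning predicate of the `m`-player Hypercube game for question `q`, when the
players use the strategy `hcStrat`: parity (the product of player `i`'s assignments on
the facet `x_i = q_i` is `1`, except `(-1)^{q₁}` for the first player) and consistency
(any two players agree on common vertices). -/
def hcWin (m : ℕ) (q : Fin m → Bool) : Prop :=
  (∀ i : Fin m,
      (∏ x ∈ Finset.univ.filter (fun x : Fin m → Bool => x i = q i), hcStrat m i (q i) x) =
        (if (i : ℕ) = 0 ∧ q i = true then -1 else 1)) ∧
  (∀ i j : Fin m, ∀ x : Fin m → Bool, x i = q i → x j = q j →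
      hcStrat m i (q i) x = hcStrat m j (q j) x)

open Finset

/-!
Parity holds for every question: player 1 places its single `-1` on the all-ones vertex exactly
when `q₁ = 1`, and every other product is empty of `-1`s. So the strategy wins iff it is
consistent, and consistency can only fail at the all-ones vertex, when it lies both on player 1's
facet (`q₁ = 1`) and on the facet of another player `j` (`q_j = 1`). Hence the winning questions
are those with `q₁ = 0`, half of all questions, together with `(1,0,…,0)`.
-/

lemma hcStrat_eq_one_of_not_zero_true {m : ℕ} {i : Fin m} {qi : Bool} {x : Fin m → Bool}
    (h : ¬((i : ℕ) = 0 ∧ qi = true)) : hcStrat m i qi x = 1 :=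
  if_neg fun h' => h ⟨h'.1, h'.2.1⟩

lemma hcStrat_eq_one_of_ne_top {m : ℕ} {i : Fin m} {qi : Bool} {x : Fin m → Bool}
    (hx : x ≠ fun _ => true) : hcStrat m i qi x = 1 :=
  if_neg fun h => hx h.2.2

lemma prod_hcStrat_facet (m : ℕ) (q : Fin m → Bool) (i : Fin m) :
    ∏ x ∈ univ.filter (fun x : Fin m → Bool => x i = q i), hcStrat m i (q i) x =
      if (i : ℕ) = 0 ∧ q i = true then -1 else 1 := by
  split_ifs with h
  · rw [prod_eq_single_of_mem (fun _ => true) (by simp [h.2])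
      fun x _ hx => hcStrat_eq_one_of_ne_top hx]
    simp [hcStrat, h]
  · exact prod_eq_one fun x _ => hcStrat_eq_one_of_not_zero_true h

lemma hcWin_iff_consistent (m : ℕ) (q : Fin m → Bool) :
    hcWin m q ↔ ∀ i j : Fin m, ∀ x : Fin m → Bool, x i = q i → x j = q j →
      hcStrat m i (q i) x = hcStrat m j (q j) x :=
  and_iff_right (prod_hcStrat_facet m q)

lemma exists_ne_zero_of_ne_indicator {m : ℕ} (hm : 0 < m) {q : Fin m → Bool}
    (h0 : q ⟨0, hm⟩ = true) (hq : q ≠ fun i : Fin m => decide ((i : ℕ) = 0)) :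
    ∃ j : Fin m, (j : ℕ) ≠ 0 ∧ q j = true := by
  obtain ⟨k, hk⟩ := Function.ne_iff.mp hq
  by_cases hk0 : (k : ℕ) = 0
  · obtain rfl : k = ⟨0, hm⟩ := Fin.ext hk0
    simp [h0] at hk
  · exact ⟨k, hk0, by simpa [hk0] using hk⟩

lemma hcWin_iff (m : ℕ) (hm : 0 < m) (q : Fin m → Bool) :
    hcWin m q ↔ q ⟨0, hm⟩ = false ∨ q = fun i : Fin m => decide ((i : ℕ) = 0) := by
  rw [hcWin_iff_consistent]
  constructor
  · intro hcon
    by_contra! hq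
    have h0 : q ⟨0, hm⟩ = true := by simpa using hq.1
    obtain ⟨j, hj0, hj⟩ := exists_ne_zero_of_ne_indicator hm h0 hq.2
    -- at the all-ones vertex player 1 says `-1` and player `j` says `+1`
    have := hcon ⟨0, hm⟩ j (fun _ => true) h0.symm hj.symm
    norm_num [hcStrat, h0, hj0] at this
  · rintro (h0 | rfl) i j x hxi hxj
    · have hone : ∀ k : Fin m, hcStrat m k (q k) x = 1 := fun k =>
        hcStrat_eq_one_of_not_zero_true fun ⟨hk0, hk⟩ => by
          obtain rfl : k = ⟨0, hm⟩ := Fin.ext hk0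
          simp [h0] at hk
      rw [hone i, hone j]
    · by_cases hx : x = fun _ => true
      · subst hx
        obtain rfl : i = j := Fin.ext <| by simp at hxi hxj; omega
        rfl
      · rw [hcStrat_eq_one_of_ne_top hx, hcStrat_eq_one_of_ne_top hx]

lemma card_filter_apply_eq_bool {ι : Type*} [Fintype ι] [DecidableEq ι] (i : ι) (b : Bool) :
    #(univ.filter fun q : ι → Bool => q i = b) = 2 ^ (Fintype.card ι - 1) := by
  simpa only [Fintype.piFinset_univ, card_univ, Fintype.card_bool] using
    Fintype.card_filter_piFinset_const_eq_of_mem (univ : Finset Bool) i (mem_univ b)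

lemma card_filter_hcWin (m : ℕ) (hm : 0 < m) :
    #(univ.filter fun q : Fin m → Bool => hcWin m q) = 2 ^ (m - 1) + 1 := by
  have hset : univ.filter (fun q : Fin m → Bool => hcWin m q) =
      insert (fun i : Fin m => decide ((i : ℕ) = 0))
        (univ.filter fun q : Fin m → Bool => q ⟨0, hm⟩ = false) := by
    ext q
    simp [hcWin_iff m hm, or_comm]
  rw [hset, card_insert_of_notMem (by simp), card_filter_apply_eq_bool, Fintype.card_fin]

lemma two_pow_pred_add_one_div_two_pow {n : ℕ} (hn : 0 < n) :
    ((2 ^ (n - 1) + 1 : ℕ) : ℝ) / 2 ^ n = 1 / 2 + 1 / 2 ^ n := by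
  obtain ⟨k, rfl⟩ := Nat.exists_eq_add_of_lt hn
  simp only [zero_add, Nat.add_sub_cancel, Nat.cast_add, Nat.cast_pow, Nat.cast_ofNat,
    Nat.cast_one]
  field_simp
  ring

theorem stmt_16 (m : ℕ) (hm : 2 ≤ m) :
    (∀ q : Fin m → Bool,
        hcWin m q ↔ (q ⟨0, by omega⟩ = false ∨ q = fun i : Fin m => decide ((i : ℕ) = 0))) ∧
    (Finset.univ.filter (fun q : Fin m → Bool => hcWin m q)).card = 2 ^ (m - 1) + 1 ∧
    ((Finset.univ.filter (fun q : Fin m → Bool => hcWin m q)).card : ℝ) / 2 ^ m =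
      1 / 2 + 1 / 2 ^ m := by
  have hm0 : 0 < m := by omega
  refine ⟨hcWin_iff m hm0, card_filter_hcWin m hm0, ?_⟩
  rw [card_filter_hcWin m hm0, two_pow_pred_add_one_div_two_pow hm0]
end
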